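/- Quantum Bayesian Inference Theorem, backward direction: Let τ be a quantum state on ℂ^n ⊗ ℂ^m (a positive semidefinite trace-1 matrix indexed by Fin n × Fin m) with proj(τ) positive definite, and let q be a predicate (effect) on ℂ^m such that tr(τ * (1 ⊗ q)) ≠ 0 and tr(proj(τ) * (extr(τ) ≪ q)) ≠ 0. Then the first marginal of the lower conditioning of τ by 1 ⊗ q equals the transpose of the upper conditioning of proj(τ) by the backward-transformed predicate: M₁(τ|_{1 ⊗ q}) = (proj(τ)|^{extr(τ) ≪ q})ᵀ. Here 1 ⊗ q is the Kronecker product (1 ⊗ q) (i,k) (j,ℓ) := δ_{i j} * q k ℓ, and √(1 ⊗ q) = 1 ⊗ √q. -/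

import Mathlib

/-! Write `R = √(proj τ)`. The extracted channel is `extr(τ) k ℓ = R⁻¹ T_{kℓ} R⁻¹`, where
`T_{kℓ} i j = conj (τ (i,k) (j,ℓ))`, so `R (extr(τ) ≪ q) R = ∑ q k ℓ • T_{kℓ}`, which for Hermitian
`τ` is `M₁(τ (1 ⊗ q))ᵀ`. Cyclicity of the trace turns `tr(proj τ (extr(τ) ≪ q))` into the trace of
this matrix, i.e. `tr(τ (1 ⊗ q))`. On the other side, the partial trace over the second factor is
cyclic in operators `1 ⊗ A`, so `M₁((1 ⊗ √q) τ (1 ⊗ √q)) = M₁(τ (1 ⊗ q))`. -/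

open Matrix Kronecker
open scoped ComplexOrder

noncomputable section

/-- Transpose of the first marginal of a joint quantum state. -/
def qproj {n m : ℕ} (τ : Matrix (Fin n × Fin m) (Fin n × Fin m) ℂ) :
    Matrix (Fin n) (Fin n) ℂ :=
  Matrix.of fun i j => ∑ k, τ (j, k) (i, k)

/-- The removed `Matrix.PosSemidef.sqrt`, with its old definition. -/
def Matrix.PosSemidef.sqrt {𝕜 : Type*} [RCLike 𝕜] {n : Type*} [Fintype n] [DecidableEq n]
    {A : Matrix n n 𝕜} (hA : A.PosSemidef) : Matrix n n 𝕜 :=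
  hA.1.eigenvectorUnitary.1 * diagonal ((↑) ∘ (√·) ∘ hA.1.eigenvalues) *
    (star hA.1.eigenvectorUnitary : Matrix n n 𝕜)

/-- Channel extracted from a joint quantum state. -/
def qextr {n m : ℕ} (τ : Matrix (Fin n × Fin m) (Fin n × Fin m) ℂ)
    (h : (qproj τ).PosDef) : Fin m → Fin m → Matrix (Fin n) (Fin n) ℂ :=
  fun k ℓ => ∑ i, ∑ j, (starRingEnd ℂ) (τ (i, k) (j, ℓ))
    • ((h.posSemidef.sqrt)⁻¹ * Matrix.single i j 1 * (h.posSemidef.sqrt)⁻¹)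

/-- Backward predicate transformation `c ≪ q := ∑ k ℓ, q k ℓ • c k ℓ`. -/
def qbwd {n m : ℕ} (c : Fin m → Fin m → Matrix (Fin n) (Fin n) ℂ)
    (q : Matrix (Fin m) (Fin m) ℂ) : Matrix (Fin n) (Fin n) ℂ :=
  ∑ k, ∑ ℓ, q k ℓ • c k ℓ

namespace Matrix

section Sqrt

variable {𝕜 ι : Type*} [RCLike 𝕜] [Fintype ι] [DecidableEq ι]

theorem PosSemidef.sqrt_mul_self {A : Matrix ι ι 𝕜} (hA : A.PosSemidef) :
    hA.sqrt * hA.sqrt = A := by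
  set U : Matrix ι ι 𝕜 := hA.1.eigenvectorUnitary.1
  set D : Matrix ι ι 𝕜 := diagonal ((↑) ∘ (√·) ∘ hA.1.eigenvalues)
  have hU : star U * U = 1 := Unitary.star_mul_self_of_mem hA.1.eigenvectorUnitary.2
  have hD : D * D = diagonal (RCLike.ofReal ∘ hA.1.eigenvalues) := by
    rw [diagonal_mul_diagonal]
    congr 1
    funext i
    simp only [Function.comp_apply, ← RCLike.ofReal_mul,
      Real.mul_self_sqrt (hA.eigenvalues_nonneg i)]
  calc hA.sqrt * hA.sqrt = U * D * (star U * U) * D * star U := by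
        simp only [PosSemidef.sqrt, U, D, Matrix.mul_assoc]
    _ = A := by
        rw [hU, Matrix.mul_one, Matrix.mul_assoc U D D, hD]
        conv_rhs => rw [hA.1.spectral_theorem, Unitary.conjStarAlgAut_apply]

theorem PosDef.isUnit_det_sqrt {A : Matrix ι ι 𝕜} (hA : A.PosDef) :
    IsUnit hA.posSemidef.sqrt.det := by
  refine isUnit_iff_ne_zero.mpr fun h => hA.det_pos.ne' ?_
  rw [← hA.posSemidef.sqrt_mul_self, det_mul, h, mul_zero]

end Sqrt

section PartialTrace

variable {R ι κ : Type*} [Fintype κ]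

/-- `M₁` of the paper. -/
def partialTraceRight [AddCommMonoid R] (τ : Matrix (ι × κ) (ι × κ) R) : Matrix ι ι R :=
  of fun i j => ∑ k, τ (i, k) (j, k)

theorem partialTraceRight_smul [Semiring R] (c : R) (τ : Matrix (ι × κ) (ι × κ) R) :
    partialTraceRight (c • τ) = c • partialTraceRight τ := by
  ext i j
  simp [partialTraceRight, Finset.mul_sum]

theorem trace_partialTraceRight [AddCommMonoid R] [Fintype ι] (τ : Matrix (ι × κ) (ι × κ) R) :
    (partialTraceRight τ).trace = τ.trace := by
  simp [partialTraceRight, trace, Fintype.sum_prod_type]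

variable [CommSemiring R] [Fintype ι] [DecidableEq ι]

theorem partialTraceRight_one_kronecker_mul (A : Matrix κ κ R) (τ : Matrix (ι × κ) (ι × κ) R) :
    partialTraceRight ((1 ⊗ₖ A) * τ) = partialTraceRight (τ * (1 ⊗ₖ A)) := by
  ext i j
  simp only [partialTraceRight, of_apply, mul_apply, kroneckerMap_apply, one_apply, mul_comm,
    mul_ite, mul_one, mul_zero, ite_mul, zero_mul, Fintype.sum_prod_type, Finset.sum_ite_irrel,
    Finset.sum_const_zero, Finset.sum_ite_eq, Finset.sum_ite_eq', Finset.mem_univ, if_true]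
  exact Finset.sum_comm

theorem partialTraceRight_one_kronecker_mul_mul (A B : Matrix κ κ R)
    (τ : Matrix (ι × κ) (ι × κ) R) :
    partialTraceRight ((1 ⊗ₖ A) * τ * (1 ⊗ₖ B)) = partialTraceRight (τ * (1 ⊗ₖ (B * A))) := by
  rw [Matrix.mul_assoc, partialTraceRight_one_kronecker_mul, Matrix.mul_assoc, ← mul_kronecker_mul,
    Matrix.one_mul]

end PartialTrace

end Matrix

section Extraction

variable {n m : ℕ}

theorem qbwd_mul_mul (A B : Matrix (Fin n) (Fin n) ℂ)
    (c : Fin m → Fin m → Matrix (Fin n) (Fin n) ℂ) (q : Matrix (Fin m) (Fin m) ℂ) :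
    qbwd (fun k ℓ => A * c k ℓ * B) q = A * qbwd c q * B := by
  simp only [qbwd, Matrix.mul_sum, Matrix.sum_mul, Matrix.mul_smul, Matrix.smul_mul]

theorem qextr_eq (τ : Matrix (Fin n × Fin m) (Fin n × Fin m) ℂ) (h : (qproj τ).PosDef) :
    qextr τ h = fun k ℓ => (h.posSemidef.sqrt)⁻¹ * (of fun i j => star (τ (i, k) (j, ℓ)))
      * (h.posSemidef.sqrt)⁻¹ := by
  funext k ℓ
  conv_rhs => rw [matrix_eq_sum_single (of _)]
  simp only [qextr, Matrix.mul_sum, Matrix.sum_mul, of_apply]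
  refine Finset.sum_congr rfl fun i _ => Finset.sum_congr rfl fun j _ => ?_
  rw [← Matrix.smul_mul, ← Matrix.mul_smul, smul_single, smul_eq_mul, mul_one]
  rfl

variable {τ : Matrix (Fin n × Fin m) (Fin n × Fin m) ℂ}

theorem qbwd_star_blocks_eq_transpose_partialTraceRight (hτ : τ.IsHermitian)
    (q : Matrix (Fin m) (Fin m) ℂ) :
    qbwd (fun k ℓ => of fun i j => star (τ (i, k) (j, ℓ))) q
      = (partialTraceRight (τ * (1 ⊗ₖ q)))ᵀ := by
  ext i j
  simp only [qbwd, Matrix.sum_apply, Matrix.smul_apply, of_apply, smul_eq_mul, hτ.apply,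
    partialTraceRight, transpose_apply, mul_apply, kroneckerMap_apply, one_apply, ite_mul,
    one_mul, zero_mul, mul_ite, mul_zero, Fintype.sum_prod_type, Finset.sum_ite_irrel,
    Finset.sum_const_zero, Finset.sum_ite_eq', Finset.mem_univ, if_true]
  rw [Finset.sum_comm]
  simp only [mul_comm]

theorem sqrt_mul_qbwd_qextr_mul_sqrt (hτ : τ.IsHermitian) (h : (qproj τ).PosDef)
    (q : Matrix (Fin m) (Fin m) ℂ) :
    h.posSemidef.sqrt * qbwd (qextr τ h) q * h.posSemidef.sqrt
      = (partialTraceRight (τ * (1 ⊗ₖ q)))ᵀ := by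
  have hR := h.isUnit_det_sqrt
  rw [qextr_eq, qbwd_mul_mul, qbwd_star_blocks_eq_transpose_partialTraceRight hτ,
    Matrix.mul_assoc _ _ (h.posSemidef.sqrt)⁻¹, mul_nonsing_inv_cancel_left _ _ hR,
    nonsing_inv_mul_cancel_right _ _ hR]

theorem trace_qproj_mul_qbwd_qextr (hτ : τ.IsHermitian) (h : (qproj τ).PosDef)
    (q : Matrix (Fin m) (Fin m) ℂ) :
    (qproj τ * qbwd (qextr τ h) q).trace = (τ * (1 ⊗ₖ q)).trace := by
  set R := h.posSemidef.sqrt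
  calc (qproj τ * qbwd (qextr τ h) q).trace = (R * qbwd (qextr τ h) q * R).trace := by
        rw [trace_mul_comm (R * _) R, ← Matrix.mul_assoc, h.posSemidef.sqrt_mul_self]
    _ = _ := by
        rw [sqrt_mul_qbwd_qextr_mul_sqrt hτ h, trace_transpose, trace_partialTraceRight]

end Extraction

theorem quantum_bayesian_inference_backward_general {n m : ℕ}
    (τ : Matrix (Fin n × Fin m) (Fin n × Fin m) ℂ)
    (hτ : τ.PosSemidef)
    (hproj : (qproj τ).PosDef)
    (q : Matrix (Fin m) (Fin m) ℂ)
    (hq : q.PosSemidef) :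
    ∀ i j : Fin n,
      (∑ k, (((τ * ((1 : Matrix (Fin n) (Fin n) ℂ) ⊗ₖ q)).trace)⁻¹
          • (((1 : Matrix (Fin n) (Fin n) ℂ) ⊗ₖ hq.sqrt) * τ
              * ((1 : Matrix (Fin n) (Fin n) ℂ) ⊗ₖ hq.sqrt))) (i, k) (j, k))
        = ((((qproj τ * qbwd (qextr τ hproj) q).trace)⁻¹
            • (hproj.posSemidef.sqrt * qbwd (qextr τ hproj) q
                * hproj.posSemidef.sqrt))ᵀ) i j := by
  intro i j
  change partialTraceRight (κ := Fin m) _ i j = _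
  rw [partialTraceRight_smul, partialTraceRight_one_kronecker_mul_mul, hq.sqrt_mul_self,
    trace_qproj_mul_qbwd_qextr hτ.isHermitian, sqrt_mul_qbwd_qextr_mul_sqrt hτ.isHermitian,
    transpose_smul, transpose_transpose]

/-- Quantum Bayesian Inference Theorem, backward direction:
`M₁(τ|_{1 ⊗ q}) = (proj(τ)|^{extr(τ) ≪ q})ᵀ`, where lower conditioning of `τ`
by `1 ⊗ q` uses `√(1 ⊗ q) = 1 ⊗ √q`. -/
theorem quantum_bayesian_inference_backward {n m : ℕ}
    (τ : Matrix (Fin n × Fin m) (Fin n × Fin m) ℂ)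
    (hτ : τ.PosSemidef) (hτtr : τ.trace = 1)
    (hproj : (qproj τ).PosDef)
    (q : Matrix (Fin m) (Fin m) ℂ)
    (hq : q.PosSemidef) (hq1 : (1 - q).PosSemidef)
    (hv : (τ * ((1 : Matrix (Fin n) (Fin n) ℂ) ⊗ₖ q)).trace ≠ 0)
    (hv' : (qproj τ * qbwd (qextr τ hproj) q).trace ≠ 0) :
    ∀ i j : Fin n,
      (∑ k, (((τ * ((1 : Matrix (Fin n) (Fin n) ℂ) ⊗ₖ q)).trace)⁻¹
          • (((1 : Matrix (Fin n) (Fin n) ℂ) ⊗ₖ hq.sqrt) * τ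
              * ((1 : Matrix (Fin n) (Fin n) ℂ) ⊗ₖ hq.sqrt))) (i, k) (j, k))
        = ((((qproj τ * qbwd (qextr τ hproj) q).trace)⁻¹
            • (hproj.posSemidef.sqrt * qbwd (qextr τ hproj) q
                * hproj.posSemidef.sqrt))ᵀ) i j :=
  quantum_bayesian_inference_backward_general τ hτ hproj q hq

end
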